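/- arXiv:1803.04896 — 3 statements merged into one kernel-verified Lean document; each statement's English description precedes it below -/
import Mathlib

section
/- Let α₁, α₂, β₁, β₂, γ > 0, let A be the symmetric 3×3 matrix with rows (1+α₁, 0, β₁), (0, 1+α₂, β₂), (β₁, β₂, −γ), and let B = diag((1+α₁)⁻¹, (1+α₂)⁻¹, s) where s = (γ + β₁² + β₂²)⁻¹ + (γ + β₁²/α₁ + β₂²/α₂)⁻¹. Then B is symmetric positive definite and BA is invertible. -/
theorem Matrix.det_saddlePoint_fin_three {R : Type*} [CommRing R] (a b c d γ : R) :
    !![a, 0, c; 0, b, d; c, d, -γ].det = -(a * b * γ + a * d ^ 2 + b * c ^ 2) := by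
  simp only [Matrix.det_fin_three, Matrix.of_apply, Matrix.cons_val', Matrix.cons_val_zero,
    Matrix.cons_val_one, Matrix.cons_val, Matrix.cons_val_fin_one]
  ring

theorem Matrix.det_saddlePoint_fin_three_neg {R : Type*} [CommRing R] [LinearOrder R]
    [IsStrictOrderedRing R] {a b γ : R} (c d : R) (ha : 0 < a) (hb : 0 < b)
    (hγ : 0 < γ) : !![a, 0, c; 0, b, d; c, d, -γ].det < 0 := by
  rw [Matrix.det_saddlePoint_fin_three]
  have : 0 < a * b * γ := by positivity
  have : 0 ≤ a * d ^ 2 + b * c ^ 2 := by positivity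
  linarith

theorem stmt_2_general (α₁ α₂ β₁ β₂ γ : ℝ)
    (hα₁ : 0 < α₁) (hα₂ : 0 < α₂) (hγ : 0 < γ)
    (A B : Matrix (Fin 3) (Fin 3) ℝ)
    (hA : A = !![1 + α₁, 0, β₁; 0, 1 + α₂, β₂; β₁, β₂, -γ])
    (s : ℝ)
    (hs : s = (γ + β₁ ^ 2 + β₂ ^ 2)⁻¹ + (γ + β₁ ^ 2 / α₁ + β₂ ^ 2 / α₂)⁻¹)
    (hB : B = Matrix.diagonal ![(1 + α₁)⁻¹, (1 + α₂)⁻¹, s]) :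
    B.PosDef ∧ IsUnit (B * A).det := by
  have h₁ : 0 < 1 + α₁ := by linarith
  have h₂ : 0 < 1 + α₂ := by linarith
  have hs_pos : 0 < s := by
    have : 0 < γ + β₁ ^ 2 + β₂ ^ 2 := by positivity
    have : 0 < γ + β₁ ^ 2 / α₁ + β₂ ^ 2 / α₂ := by positivity
    rw [hs]
    positivity
  have hB_pos : B.PosDef := by
    rw [hB, Matrix.posDef_diagonal_iff]
    intro i
    fin_cases i <;> simp [h₁, h₂, hs_pos]
  refine ⟨hB_pos, ?_⟩
  rw [Matrix.det_mul, IsUnit.mul_iff, isUnit_iff_ne_zero, isUnit_iff_ne_zero, hA]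
  exact ⟨hB_pos.det_pos.ne', (Matrix.det_saddlePoint_fin_three_neg β₁ β₂ h₁ h₂ hγ).ne⟩

theorem stmt_2 (α₁ α₂ β₁ β₂ γ : ℝ)
    (hα₁ : 0 < α₁) (hα₂ : 0 < α₂) (hβ₁ : 0 < β₁) (hβ₂ : 0 < β₂) (hγ : 0 < γ)
    (A B : Matrix (Fin 3) (Fin 3) ℝ)
    (hA : A = !![1 + α₁, 0, β₁; 0, 1 + α₂, β₂; β₁, β₂, -γ])
    (s : ℝ)
    (hs : s = (γ + β₁ ^ 2 + β₂ ^ 2)⁻¹ + (γ + β₁ ^ 2 / α₁ + β₂ ^ 2 / α₂)⁻¹)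
    (hB : B = Matrix.diagonal ![(1 + α₁)⁻¹, (1 + α₂)⁻¹, s]) :
    B.PosDef ∧ IsUnit (B * A).det :=
  stmt_2_general α₁ α₂ β₁ β₂ γ hα₁ hα₂ hγ A B hA s hs hB
end

section
/- Let α₁, α₂, β₁, β₂, γ > 0, A the symmetric 3×3 matrix with rows (1+α₁, 0, β₁), (0, 1+α₂, β₂), (β₁, β₂, −γ), and B = diag((1+α₁)⁻¹, (1+α₂)⁻¹, S⁻¹) with S = γ + β₁²/(1+α₁) + β₂²/(1+α₂) (the exact Schur complement). Then the preconditioned matrix B A, which is similar to the symmetric matrix B^{1/2} A B^{1/2}, has eigenvalues contained in [−1, −(√5−1)/2] ∪ [1, (1+√5)/2], independent of all parameters. -/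
/-! Conjugating by `B^{1/2} = diag(1 + α₁, 1 + α₂, S)^{-1/2}` turns `A` into the arrowhead matrix
`[[1, 0, p], [0, 1, q], [p, q, -γ/S]]`, and because `S` is the exact Schur complement,
`p² + q² = 1 - γ/S =: t ∈ [0, 1]`. Its characteristic polynomial is `(μ - 1)(μ² - tμ - 1)`. A root
of `μ² = tμ + 1` has `μ² - 1 = tμ` between `0` and `μ`: for `μ ≥ 0` this gives `1 ≤ μ² ≤ μ + 1`,
i.e. `μ ∈ [1, φ]`, and for `μ < 0` it gives `μ + 1 ≤ μ² ≤ 1`, i.e. `μ ∈ [-1, ψ]`. -/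

open Matrix Set Real goldenRatio

lemma mem_Icc_goldenConj_union_Icc_goldenRatio {t μ : ℝ} (ht₀ : 0 ≤ t) (ht₁ : t ≤ 1)
    (h : μ ^ 2 = t * μ + 1) : μ ∈ Icc (-1) ψ ∪ Icc 1 φ := by
  have hfactor : μ ^ 2 - μ - 1 = (μ - φ) * (μ - ψ) := by
    linear_combination μ * goldenRatio_add_goldenConj - goldenRatio_mul_goldenConj
  rcases le_or_gt 0 μ with hμ | hμ
  · have hle : (μ - φ) * (μ - ψ) ≤ 0 := by nlinarith [mul_nonneg (sub_nonneg.2 ht₁) hμ]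
    right
    constructor
    · nlinarith [mul_nonneg ht₀ hμ]
    · nlinarith [goldenConj_neg]
  · have hge : 0 ≤ (μ - φ) * (μ - ψ) := by
      nlinarith [mul_nonneg (sub_nonneg.2 ht₁) (neg_nonneg.2 hμ.le)]
    left
    constructor
    · nlinarith [mul_nonneg ht₀ (neg_nonneg.2 hμ.le)]
    · nlinarith [goldenRatio_pos]

lemma mul_eq_conj_of_mul_self_eq {n α : Type*} [Fintype n] [DecidableEq n] [CommRing α]
    {A B C : Matrix n n α} (hC : C * C = B) (hdet : IsUnit C.det) :
    B * A = C * (C * A * C) * C⁻¹ := by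
  rw [← hC]
  simp only [Matrix.mul_assoc, mul_nonsing_inv _ hdet, Matrix.mul_one]

lemma diagonal_sqrt_mul_self {n : Type*} [Fintype n] [DecidableEq n] {v : n → ℝ}
    (hv : ∀ i, 0 ≤ v i) :
    diagonal (fun i => √(v i)) * diagonal (fun i => √(v i)) = diagonal v := by
  rw [diagonal_mul_diagonal]
  exact congrArg diagonal (funext fun i => Real.mul_self_sqrt (hv i))

lemma isUnit_det_diagonal_sqrt {n : Type*} [Fintype n] [DecidableEq n] {v : n → ℝ}
    (hv : ∀ i, 0 < v i) :
    IsUnit (diagonal fun i => √(v i)).det := by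
  rw [det_diagonal]
  exact (Finset.prod_pos fun i _ => Real.sqrt_pos.2 (hv i)).ne'.isUnit

lemma sqrt_inv_mul_mul_sqrt_inv {a : ℝ} (ha : 0 < a) (c : ℝ) : √a⁻¹ * c * √a⁻¹ = c / a := by
  rw [mul_comm √a⁻¹ c, mul_assoc, Real.mul_self_sqrt (inv_nonneg.2 ha.le), div_eq_mul_inv]

lemma diagonal_sqrt_inv_mul_arrowhead_mul {a₁ a₂ s : ℝ} (ha₁ : 0 < a₁) (ha₂ : 0 < a₂) (hs : 0 < s)
    (b₁ b₂ c : ℝ) :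
    diagonal ![√a₁⁻¹, √a₂⁻¹, √s⁻¹] * !![a₁, 0, b₁; 0, a₂, b₂; b₁, b₂, c] *
        diagonal ![√a₁⁻¹, √a₂⁻¹, √s⁻¹] =
      !![1, 0, b₁ * √a₁⁻¹ * √s⁻¹; 0, 1, b₂ * √a₂⁻¹ * √s⁻¹;
        b₁ * √a₁⁻¹ * √s⁻¹, b₂ * √a₂⁻¹ * √s⁻¹, c / s] := by
  ext i j
  fin_cases i <;> fin_cases j <;> rw [mul_diagonal, diagonal_mul] <;>
    simp only [Fin.isValue, of_apply, cons_val', cons_val_zero, cons_val_one, cons_val,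
      cons_val_fin_one, Fin.zero_eta, Fin.mk_one, Fin.reduceFinMk, mul_zero, zero_mul] <;>
    first
      | ring1
      | rw [sqrt_inv_mul_mul_sqrt_inv hs]
      | rw [sqrt_inv_mul_mul_sqrt_inv ha₁, div_self ha₁.ne']
      | rw [sqrt_inv_mul_mul_sqrt_inv ha₂, div_self ha₂.ne']

lemma sq_mul_sqrt_inv_mul_sqrt_inv (b : ℝ) {a s : ℝ} (ha : 0 ≤ a) (hs : 0 ≤ s) :
    (b * √a⁻¹ * √s⁻¹) ^ 2 = b ^ 2 / (a * s) := by
  rw [mul_pow, mul_pow, Real.sq_sqrt (inv_nonneg.2 ha), Real.sq_sqrt (inv_nonneg.2 hs), mul_assoc,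
    ← mul_inv, ← div_eq_mul_inv]

lemma isHermitian_arrowhead (p q d : ℝ) : (!![1, 0, p; 0, 1, q; p, q, d]).IsHermitian := by
  ext i j
  fin_cases i <;> fin_cases j <;> simp

lemma det_smul_one_sub_arrowhead (p q d μ : ℝ) :
    (μ • 1 - !![1, 0, p; 0, 1, q; p, q, d]).det =
      (μ - 1) * ((μ - 1) * (μ - d) - p ^ 2 - q ^ 2) := by
  simp only [det_fin_three, Matrix.sub_apply, Matrix.smul_apply, one_apply, of_apply, cons_val',
    cons_val_zero, cons_val_one, cons_val, cons_val_fin_one, Fin.isValue, Fin.reduceEq, ↓reduceIte,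
    smul_eq_mul]
  ring

lemma spectrum_arrowhead_subset {p q d : ℝ} (hd : d ≤ 0) (hpq : p ^ 2 + q ^ 2 = 1 + d) :
    spectrum ℝ !![1, 0, p; 0, 1, q; p, q, d] ⊆ Icc (-1) ψ ∪ Icc 1 φ := by
  intro μ hμ
  rw [spectrum.mem_iff, Matrix.isUnit_iff_isUnit_det, isUnit_iff_ne_zero, not_not,
    Algebra.algebraMap_eq_smul_one, det_smul_one_sub_arrowhead] at hμ
  rcases mul_eq_zero.1 hμ with hμ₁ | hquad
  · rw [sub_eq_zero.1 hμ₁]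
    exact mem_Icc_goldenConj_union_Icc_goldenRatio le_rfl zero_le_one (by norm_num)
  · exact mem_Icc_goldenConj_union_Icc_goldenRatio (t := p ^ 2 + q ^ 2) (by positivity)
      (by linarith) (by linear_combination hquad - (μ - 1) * hpq)

theorem stmt_13_general (α₁ α₂ β₁ β₂ γ : ℝ)
    (hα₁ : 0 < α₁) (hα₂ : 0 < α₂) (hγ : 0 < γ)
    (A B Bh : Matrix (Fin 3) (Fin 3) ℝ)
    (hA : A = !![1 + α₁, 0, β₁; 0, 1 + α₂, β₂; β₁, β₂, -γ])
    (S : ℝ) (hS : S = γ + β₁ ^ 2 / (1 + α₁) + β₂ ^ 2 / (1 + α₂))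
    (hB : B = Matrix.diagonal ![(1 + α₁)⁻¹, (1 + α₂)⁻¹, S⁻¹])
    (hBh : Bh = Matrix.diagonal
      ![Real.sqrt (1 + α₁)⁻¹, Real.sqrt (1 + α₂)⁻¹, Real.sqrt S⁻¹]) :
    B * A = Bh * (Bh * A * Bh) * Bh⁻¹ ∧
    ∃ hH : (Bh * A * Bh).IsHermitian, ∀ i,
      hH.eigenvalues i ∈
        Set.Icc (-1 : ℝ) (-((Real.sqrt 5 - 1) / 2)) ∪
        Set.Icc (1 : ℝ) ((1 + Real.sqrt 5) / 2) := by
  have ha₁ : 0 < 1 + α₁ := by linarith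
  have ha₂ : 0 < 1 + α₂ := by linarith
  have hS₀ : 0 < S := by rw [hS]; positivity
  have hv : ∀ i, 0 < ![(1 + α₁)⁻¹, (1 + α₂)⁻¹, S⁻¹] i := by
    intro i; fin_cases i <;> simp [ha₁, ha₂, hS₀]
  have hBh' : Bh = diagonal fun i => √(![(1 + α₁)⁻¹, (1 + α₂)⁻¹, S⁻¹] i) := by
    rw [hBh]; congr 1; ext i; fin_cases i <;> rfl
  have hBB : Bh * Bh = B := by rw [hBh', hB, diagonal_sqrt_mul_self fun i => (hv i).le]
  have hM := diagonal_sqrt_inv_mul_arrowhead_mul ha₁ ha₂ hS₀ β₁ β₂ (-γ)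
  rw [← hA, ← hBh] at hM
  have hH : (Bh * A * Bh).IsHermitian := hM ▸ isHermitian_arrowhead _ _ _
  refine ⟨mul_eq_conj_of_mul_self_eq hBB (hBh' ▸ isUnit_det_diagonal_sqrt hv), hH, fun i => ?_⟩
  have hpq : (β₁ * √(1 + α₁)⁻¹ * √S⁻¹) ^ 2 + (β₂ * √(1 + α₂)⁻¹ * √S⁻¹) ^ 2 = 1 + -γ / S := by
    rw [sq_mul_sqrt_inv_mul_sqrt_inv _ ha₁.le hS₀.le, sq_mul_sqrt_inv_mul_sqrt_inv _ ha₂.le hS₀.le]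
    subst hS
    field_simp
    ring
  have hμ := hH.eigenvalues_mem_spectrum_real i
  generalize hH.eigenvalues i = μ at hμ ⊢
  rw [hM] at hμ
  rw [show -((√5 - 1) / 2) = ψ by rw [goldenConj]; ring]
  exact spectrum_arrowhead_subset (by rw [neg_div, neg_nonpos]; positivity) hpq hμ

theorem stmt_13 (α₁ α₂ β₁ β₂ γ : ℝ)
    (hα₁ : 0 < α₁) (hα₂ : 0 < α₂) (hβ₁ : 0 < β₁) (hβ₂ : 0 < β₂) (hγ : 0 < γ)
    (A B Bh : Matrix (Fin 3) (Fin 3) ℝ)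
    (hA : A = !![1 + α₁, 0, β₁; 0, 1 + α₂, β₂; β₁, β₂, -γ])
    (S : ℝ) (hS : S = γ + β₁ ^ 2 / (1 + α₁) + β₂ ^ 2 / (1 + α₂))
    (hB : B = Matrix.diagonal ![(1 + α₁)⁻¹, (1 + α₂)⁻¹, S⁻¹])
    (hBh : Bh = Matrix.diagonal
      ![Real.sqrt (1 + α₁)⁻¹, Real.sqrt (1 + α₂)⁻¹, Real.sqrt S⁻¹]) :
    B * A = Bh * (Bh * A * Bh) * Bh⁻¹ ∧
    ∃ hH : (Bh * A * Bh).IsHermitian, ∀ i,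
      hH.eigenvalues i ∈
        Set.Icc (-1 : ℝ) (-((Real.sqrt 5 - 1) / 2)) ∪
        Set.Icc (1 : ℝ) ((1 + Real.sqrt 5) / 2) :=
  stmt_13_general α₁ α₂ β₁ β₂ γ hα₁ hα₂ hγ A B Bh hA S hS hB hBh
end

section
/- Let V ⊂ H¹(Ω) and Q ⊂ L²(Γ) be finite-dimensional subspaces, and let the discrete eigenvalue problem be: find λ ∈ ℝ, (u, p) ∈ V × Q with (u, v)_Ω + (p, Π v)_Γ = λ(u, v)_Ω for all v ∈ V and (q, Π u)_Γ = λ h⁻¹(p, q)_Γ for all q ∈ Q, where Π : V → Q is a bounded linear map and h > 0. If M_V, M_Q denote the Gram matrices and T the coupling matrix, every eigenvalue λ of this problem is real, and λ satisfies either λ = 1 (eigenvectors with Tᵀp-component structure) or λ(λ−1) = μ·h for some generalized singular value μ ≥ 0 of the coupling; in particular all eigenvalues satisfy λ ∈ {1} ∪ {(1 ± √(1+4μh))/2 : μ a nonnegative eigenvalue of M_Q⁻¹ T M_V⁻¹ Tᵀ scaled appropriately}. -/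
/-! For `λ ≠ 1` the first block row gives `Tᵀ p = (λ - 1) M_V u`, so `p ≠ 0` and eliminating
`u` through the second row turns the problem into `M_Q⁻¹ T M_V⁻¹ Tᵀ p = μ p` with
`μ = λ (λ - 1) / h`. Since `T M_V⁻¹ Tᵀ` is positive semidefinite and `M_Q` positive definite,
`μ ≥ 0`, and `λ` is a root of `λ² - λ - μ h = 0`. -/

open Matrix

theorem eq_roots_of_mul_sub_one_eq {x c : ℝ} (h : x * (x - 1) = c) :
    x = (1 + √(1 + 4 * c)) / 2 ∨ x = (1 - √(1 + 4 * c)) / 2 := by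
  have hdisc : 1 + 4 * c = (2 * x - 1) ^ 2 := by rw [← h]; ring
  rcases le_or_gt (1 / 2) x with hx | hx
  · left
    rw [hdisc, Real.sqrt_sq (by linarith)]
    ring
  · right
    rw [hdisc, show (2 * x - 1) ^ 2 = (1 - 2 * x) ^ 2 by ring, Real.sqrt_sq (by linarith)]
    ring

namespace Matrix

variable {n m : Type*} [Fintype n] [Fintype m] [DecidableEq n]

theorem PosDef.eigenvalue_inv_mul_nonneg {A B : Matrix n n ℝ} (hA : A.PosDef)
    (hB : B.PosSemidef) {v : n → ℝ} (hv : v ≠ 0) {μ : ℝ} (hμ : (A⁻¹ * B) *ᵥ v = μ • v) :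
    0 ≤ μ := by
  have hBv : B *ᵥ v = μ • A *ᵥ v := by
    rw [← mulVec_smul, ← hμ, mulVec_mulVec, ← Matrix.mul_assoc,
      mul_nonsing_inv _ (A.isUnit_iff_isUnit_det.1 hA.isUnit), Matrix.one_mul]
  have hquad : v ⬝ᵥ B *ᵥ v = μ * (v ⬝ᵥ A *ᵥ v) := by
    rw [hBv, dotProduct_smul, smul_eq_mul]
  have hpos : 0 < v ⬝ᵥ A *ᵥ v := by simpa using hA.dotProduct_mulVec_pos hv
  have hnonneg : 0 ≤ v ⬝ᵥ B *ᵥ v := by simpa using hB.dotProduct_mulVec_nonneg v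
  exact nonneg_of_mul_nonneg_left (hquad ▸ hnonneg) hpos

theorem PosDef.posSemidef_mul_inv_mul_transpose {M : Matrix n n ℝ} (hM : M.PosDef)
    (T : Matrix m n ℝ) : (T * M⁻¹ * Tᵀ).PosSemidef := by
  simpa only [conjTranspose_eq_transpose_of_trivial] using
    hM.inv.posSemidef.mul_mul_conjTranspose_same T

variable {MV : Matrix n n ℝ} {MQ : Matrix m m ℝ} {T : Matrix m n ℝ} {u : n → ℝ} {p : m → ℝ}
  {lam h : ℝ}

theorem schur_mulVec_eq [DecidableEq m] (hMV : IsUnit MV.det) (hMQ : IsUnit MQ.det)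
    (hTp : Tᵀ *ᵥ p = (lam - 1) • MV *ᵥ u) (hTu : T *ᵥ u = lam • h⁻¹ • MQ *ᵥ p) :
    (MQ⁻¹ * T * MV⁻¹ * Tᵀ) *ᵥ p = (lam * (lam - 1) / h) • p := by
  have hu : (MV⁻¹ * Tᵀ) *ᵥ p = (lam - 1) • u := by
    rw [← mulVec_mulVec, hTp, mulVec_smul, mulVec_mulVec, nonsing_inv_mul _ hMV, one_mulVec]
  calc (MQ⁻¹ * T * MV⁻¹ * Tᵀ) *ᵥ p = MQ⁻¹ *ᵥ T *ᵥ (MV⁻¹ * Tᵀ) *ᵥ p := by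
        simp only [mulVec_mulVec, Matrix.mul_assoc]
    _ = ((lam - 1) * lam * h⁻¹) • (MQ⁻¹ * MQ) *ᵥ p := by
        rw [hu, mulVec_smul, hTu, mulVec_smul, mulVec_smul, mulVec_smul, mulVec_mulVec, smul_smul,
          smul_smul]
    _ = (lam * (lam - 1) / h) • p := by
        rw [nonsing_inv_mul _ hMQ, one_mulVec]
        congr 1
        ring

theorem ne_zero_of_transpose_mulVec_eq (hMV : IsUnit MV.det) (hlam : lam ≠ 1)
    (hTp : Tᵀ *ᵥ p = (lam - 1) • MV *ᵥ u) (hnz : u ≠ 0 ∨ p ≠ 0) : p ≠ 0 := by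
  rintro rfl
  have hMVu : MV *ᵥ u = 0 := by
    simpa [sub_eq_zero, hlam] using hTp.symm
  have hu : u = 0 := by
    simpa [mulVec_mulVec, nonsing_inv_mul _ hMV] using congrArg (MV⁻¹ *ᵥ ·) hMVu
  exact hnz.elim (· hu) (· rfl)

end Matrix

theorem stmt_16 (n m : ℕ) (h : ℝ) (hh : 0 < h)
    (MV : Matrix (Fin n) (Fin n) ℝ) (MQ : Matrix (Fin m) (Fin m) ℝ)
    (T : Matrix (Fin m) (Fin n) ℝ)
    (hMV : MV.PosDef) (hMQ : MQ.PosDef)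
    (lam : ℝ) (u : Fin n → ℝ) (p : Fin m → ℝ)
    (hnz : u ≠ 0 ∨ p ≠ 0)
    (heq1 : MV.mulVec u + Tᵀ.mulVec p = lam • MV.mulVec u)
    (heq2 : T.mulVec u = lam • (h⁻¹ • MQ.mulVec p)) :
    lam = 1 ∨
    ∃ μ : ℝ, 0 ≤ μ ∧
      (∃ q : Fin m → ℝ, q ≠ 0 ∧ (MQ⁻¹ * T * MV⁻¹ * Tᵀ).mulVec q = μ • q) ∧
      lam * (lam - 1) = μ * h ∧
      (lam = (1 + Real.sqrt (1 + 4 * μ * h)) / 2 ∨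
       lam = (1 - Real.sqrt (1 + 4 * μ * h)) / 2) := by
  rcases eq_or_ne lam 1 with hlam | hlam
  · exact Or.inl hlam
  have hTp : Tᵀ *ᵥ p = (lam - 1) • MV *ᵥ u := by
    rw [sub_smul, one_smul, ← heq1, add_sub_cancel_left]
  have hMVdet := MV.isUnit_iff_isUnit_det.1 hMV.isUnit
  have hp : p ≠ 0 := ne_zero_of_transpose_mulVec_eq hMVdet hlam hTp hnz
  have heig := schur_mulVec_eq hMVdet (MQ.isUnit_iff_isUnit_det.1 hMQ.isUnit) hTp heq2
  have hμ : 0 ≤ lam * (lam - 1) / h :=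
    hMQ.eigenvalue_inv_mul_nonneg (hMV.posSemidef_mul_inv_mul_transpose T) hp
      (by simpa only [Matrix.mul_assoc] using heig)
  have hquad : lam * (lam - 1) = lam * (lam - 1) / h * h := (div_mul_cancel₀ _ hh.ne').symm
  refine Or.inr ⟨_, hμ, ⟨p, hp, heig⟩, hquad, ?_⟩
  simpa only [mul_assoc, ← hquad] using eq_roots_of_mul_sub_one_eq (rfl : lam * (lam - 1) = _)
end
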